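/- For a purification φ_ρ of ρ and POVMs {Λ_x}, {Λ̃_x}: ‖(I^R ⊗ M_{Λ̃})(φ_ρ) − (I^R ⊗ M_{Λ})(φ_ρ)‖₁ = Σ_x ‖√ρ (Λ̃_x − Λ_x) √ρ‖₁. -/

import Mathlib

open Matrix BigOperators
open scoped ComplexOrder

open Classical in
noncomputable def matSqrt {d : Type*} [Fintype d] [DecidableEq d]
    (A : Matrix d d ℂ) : Matrix d d ℂ :=
  if h : A.PosSemidef then
    (h.1.eigenvectorUnitary : Matrix d d ℂ) * diagonal ((↑) ∘ (√·) ∘ h.1.eigenvalues) *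
      (star h.1.eigenvectorUnitary : Matrix d d ℂ)
  else 0

noncomputable def traceNorm {d : Type*} [Fintype d] [DecidableEq d]
    (A : Matrix d d ℂ) : ℝ :=
  (matSqrt (Aᴴ * A)).trace.re

noncomputable def pureState {d : Type*} (v : d → ℂ) : Matrix d d ℂ :=
  fun i j => v i * (starRingEnd ℂ) (v j)

noncomputable def extChannel {d X : Type*} [Fintype d] [DecidableEq X]
    (Λ : X → Matrix d d ℂ) (φ : Matrix (d × d) (d × d) ℂ) :
    Matrix (d × X) (d × X) ℂ :=
  fun p q => if p.2 = q.2 then ∑ c, ∑ c', (Λ p.2) c c' * φ (p.1, c') (q.1, c) else 0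

/-!
Applying `M_Λ` to the second half of the purification of a diagonal `ρ` yields the block-diagonal
matrix `⊕ₓ √ρ Λₓᵀ √ρ`. The trace norm is additive over diagonal blocks, since the square root of a
block-diagonal positive matrix is taken blockwise. For Hermitian `H`, `√ρ Hᵀ √ρ` is the entrywise
complex conjugate of `√ρ H √ρ`, and entrywise conjugation commutes with the square root, so it
does not change the trace norm.
-/

lemma Matrix.IsHermitian.map_conj_eq_transpose {d : Type*} {A : Matrix d d ℂ}
    (hA : A.IsHermitian) : A.map (starRingEnd ℂ) = Aᵀ := by
  ext i j
  exact hA.apply j i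

section TraceNorm

variable {d : Type*} [Fintype d] [DecidableEq d]

open scoped MatrixOrder

lemma matSqrt_eq_cfcSqrt {A : Matrix d d ℂ} (hA : A.PosSemidef) : matSqrt A = CFC.sqrt A := by
  rw [matSqrt, dif_pos hA, CFC.sqrt_eq_cfc, cfc_nnreal_eq_real _ A, hA.1.cfc_eq,
    IsHermitian.cfc, Unitary.conjStarAlgAut_apply]
  congr 3
  funext i
  simp [Real.coe_sqrt, Real.coe_toNNReal', hA.eigenvalues_nonneg i]

lemma matSqrt_eq_of_mul_self_eq {A B : Matrix d d ℂ} (hB : B.PosSemidef) (h : B * B = A) :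
    matSqrt A = B := by
  have hA : A.PosSemidef := by
    simpa only [hB.1.eq, h] using posSemidef_conjTranspose_mul_self B
  rw [matSqrt_eq_cfcSqrt hA]
  exact (CFC.sqrt_eq_iff A B hA.nonneg hB.nonneg).2 h

lemma Matrix.PosSemidef.matSqrt {A : Matrix d d ℂ} (hA : A.PosSemidef) :
    (matSqrt A).PosSemidef := by
  rw [matSqrt_eq_cfcSqrt hA]
  exact (CFC.sqrt_nonneg A).posSemidef

lemma matSqrt_mul_self {A : Matrix d d ℂ} (hA : A.PosSemidef) : matSqrt A * matSqrt A = A := by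
  rw [matSqrt_eq_cfcSqrt hA]
  exact CFC.sqrt_mul_sqrt_self A hA.nonneg

lemma Matrix.PosSemidef.blockDiagonal {X : Type*} [Fintype X] [DecidableEq X]
    {M : X → Matrix d d ℂ} (hM : ∀ x, (M x).PosSemidef) : (blockDiagonal M).PosSemidef := by
  choose B hB using fun x => CStarAlgebra.nonneg_iff_eq_star_mul_self.mp (hM x).nonneg
  have hM_eq : Matrix.blockDiagonal M = (Matrix.blockDiagonal B)ᴴ * Matrix.blockDiagonal B := by
    rw [blockDiagonal_conjTranspose, ← blockDiagonal_mul]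
    exact congrArg _ (funext hB)
  rw [hM_eq]
  exact posSemidef_conjTranspose_mul_self _

lemma traceNorm_blockDiagonal {X : Type*} [Fintype X] [DecidableEq X] (M : X → Matrix d d ℂ) :
    traceNorm (blockDiagonal M) = ∑ x, traceNorm (M x) := by
  have hpsd (x : X) : ((M x)ᴴ * M x).PosSemidef := posSemidef_conjTranspose_mul_self (M x)
  have hsqrt : matSqrt (blockDiagonal fun x => (M x)ᴴ * M x)
      = blockDiagonal fun x => matSqrt ((M x)ᴴ * M x) := by
    refine matSqrt_eq_of_mul_self_eq (.blockDiagonal fun x => (hpsd x).matSqrt) ?_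
    rw [← blockDiagonal_mul]
    exact congrArg _ (funext fun x => matSqrt_mul_self (hpsd x))
  rw [traceNorm, blockDiagonal_conjTranspose, ← blockDiagonal_mul, hsqrt, trace_blockDiagonal,
    Complex.re_sum]
  rfl

lemma traceNorm_map_conj (A : Matrix d d ℂ) :
    traceNorm (A.map (starRingEnd ℂ)) = traceNorm A := by
  have hpsd := posSemidef_conjTranspose_mul_self A
  have hconj : (A.map (starRingEnd ℂ))ᴴ * A.map (starRingEnd ℂ) = (Aᴴ * A).map (starRingEnd ℂ) := by
    rw [Matrix.map_mul, ← conjTranspose_map (starRingEnd ℂ) fun _ => rfl]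
  have hsqrt : matSqrt ((Aᴴ * A).map (starRingEnd ℂ)) = (matSqrt (Aᴴ * A)).map (starRingEnd ℂ) := by
    refine matSqrt_eq_of_mul_self_eq ?_ (by rw [← Matrix.map_mul, matSqrt_mul_self hpsd])
    rw [hpsd.matSqrt.1.map_conj_eq_transpose]
    exact hpsd.matSqrt.transpose
  rw [traceNorm, traceNorm, hconj, hsqrt, ← AddMonoidHom.map_trace]
  exact Complex.conj_re _

end TraceNorm

lemma extChannel_pureState_diagonal {d X : Type*} [Fintype d] [DecidableEq d] [DecidableEq X]
    (Λ : X → Matrix d d ℂ) (s : d → ℝ) :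
    extChannel Λ (pureState fun p : d × d => if p.1 = p.2 then (s p.1 : ℂ) else 0)
      = blockDiagonal fun x =>
          diagonal (fun i => (s i : ℂ)) * (Λ x)ᵀ * diagonal (fun i => (s i : ℂ)) := by
  ext ⟨r, x⟩ ⟨r', x'⟩
  by_cases hx : x = x'
  · subst hx
    simp only [extChannel, pureState, ↓reduceIte, apply_ite (starRingEnd ℂ), Complex.conj_ofReal,
      map_zero, mul_ite, ite_mul, zero_mul, mul_zero, Finset.sum_ite_irrel, Finset.sum_ite_eq,
      Finset.mem_univ, Finset.sum_const_zero, blockDiagonal_apply_eq, mul_diagonal, diagonal_mul,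
      transpose_apply]
    ring
  · simp [extChannel, blockDiagonal_apply, hx]

theorem purified_distance_identity_general
    {d X : Type*} [Fintype d] [DecidableEq d] [Fintype X] [DecidableEq X]
    (lam : d → ℝ)
    (Λ Λt : X → Matrix d d ℂ)
    (hpos : ∀ x, (Λ x).PosSemidef)
    (hpost : ∀ x, (Λt x).PosSemidef) :
    traceNorm
        (extChannel Λt
            (pureState (fun p : d × d => if p.1 = p.2 then (Real.sqrt (lam p.1) : ℂ) else 0))
          - extChannel Λ
            (pureState (fun p : d × d => if p.1 = p.2 then (Real.sqrt (lam p.1) : ℂ) else 0)))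
      = ∑ x, traceNorm
          ((Matrix.diagonal fun i => (Real.sqrt (lam i) : ℂ)) * (Λt x - Λ x) *
            (Matrix.diagonal fun i => (Real.sqrt (lam i) : ℂ))) := by
  rw [extChannel_pureState_diagonal Λt fun i => √(lam i),
    extChannel_pureState_diagonal Λ fun i => √(lam i), ← blockDiagonal_sub,
    traceNorm_blockDiagonal]
  refine Finset.sum_congr rfl fun x _ => ?_
  set D : Matrix d d ℂ := diagonal fun i => (√(lam i) : ℂ)
  have hD : D.map (starRingEnd ℂ) = D := by
    simp [D, diagonal_map]
  have hdiff : D * (Λt x - Λ x)ᵀ * D = (D * (Λt x - Λ x) * D).map (starRingEnd ℂ) := by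
    rw [Matrix.map_mul, Matrix.map_mul, hD, ((hpost x).1.sub (hpos x).1).map_conj_eq_transpose]
  rw [Pi.sub_apply, ← sub_mul, ← mul_sub, ← transpose_sub, hdiff, traceNorm_map_conj]

/-- Lemma 4 of Wilde et al.: For a purification of `ρ = diagonal λ` and
POVMs `{Λ x}`, `{Λ̃ x}`,
`‖(I^R ⊗ M_Λ̃)(φ_ρ) − (I^R ⊗ M_Λ)(φ_ρ)‖₁ = ∑_x ‖√ρ (Λ̃_x − Λ_x) √ρ‖₁`. -/
theorem purified_distance_identity
    {d X : Type*} [Fintype d] [DecidableEq d] [Fintype X] [DecidableEq X]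
    (lam : d → ℝ) (hlam : ∀ i, 0 ≤ lam i) (hlamsum : ∑ i, lam i = 1)
    (Λ Λt : X → Matrix d d ℂ)
    (hpos : ∀ x, (Λ x).PosSemidef) (hsum : ∑ x, Λ x = 1)
    (hpost : ∀ x, (Λt x).PosSemidef) (hsumt : ∑ x, Λt x = 1) :
    traceNorm
        (extChannel Λt
            (pureState (fun p : d × d => if p.1 = p.2 then (Real.sqrt (lam p.1) : ℂ) else 0))
          - extChannel Λ
            (pureState (fun p : d × d => if p.1 = p.2 then (Real.sqrt (lam p.1) : ℂ) else 0)))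
      = ∑ x, traceNorm
          ((Matrix.diagonal fun i => (Real.sqrt (lam i) : ℂ)) * (Λt x - Λ x) *
            (Matrix.diagonal fun i => (Real.sqrt (lam i) : ℂ))) :=
  purified_distance_identity_general lam Λ Λt hpos hpost
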